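/- arXiv:2603.21028 — 3 statements merged into one kernel-verified Lean document; each statement's English description precedes it below -/
import Mathlib

section
/- Let n ≥ 2 and let A = (A_{ij}) be a symmetric n×n real matrix. Set a = trace(A) = ∑_{i=1}^n A_{ii} and b = ‖A‖_F² = ∑_{i,j=1}^n A_{ij}². Then A_{11}·a − ∑_{i=1}^n (A_{1i})² ≥ ((n−1)/n²)·( 2a² − n·b − (n−2)·|a|·√((n·b − a²)/(n−1)) ). -/
set_option maxHeartbeats 1000000 in
/-- Hineva's lemma (inequality part): for a symmetric `n × n` real matrix `A`
with trace `a` and squared Frobenius norm `b`,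
`A₁₁·a − ∑ᵢ A₁ᵢ² ≥ ((n−1)/n²)·(2a² − n·b − (n−2)·|a|·√((n·b − a²)/(n−1)))`. -/
theorem hineva_inequality (n : ℕ) (hn : 2 ≤ n) (A : Fin n → Fin n → ℝ)
    (hA : ∀ i j, A i j = A j i)
    (a b : ℝ) (ha : a = ∑ i, A i i) (hb : b = ∑ i, ∑ j, (A i j) ^ 2) :
    A ⟨0, by omega⟩ ⟨0, by omega⟩ * a - ∑ i, (A ⟨0, by omega⟩ i) ^ 2 ≥
      ((n : ℝ) - 1) / (n : ℝ) ^ 2 *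
        (2 * a ^ 2 - (n : ℝ) * b -
          ((n : ℝ) - 2) * |a| * Real.sqrt (((n : ℝ) * b - a ^ 2) / ((n : ℝ) - 1))) := by
  have hn0 : 0 < n := by omega
  set i0 : Fin n := ⟨0, by omega⟩ with hi0
  set N : ℝ := (n : ℝ) with hN
  have hN2 : (2 : ℝ) ≤ N := by rw [hN]; exact_mod_cast hn
  have hN1 : (0 : ℝ) < N - 1 := by linarith
  have hNpos : (0 : ℝ) < N := by linarith
  set u : ℝ := A i0 i0 with hu
  set S : ℝ := ∑ i, (A i0 i) ^ 2 with hS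
  -- S ≥ u²
  have hSu : u ^ 2 ≤ S :=
    Finset.single_le_sum (f := fun i => (A i0 i) ^ 2)
      (fun i _ => sq_nonneg _) (Finset.mem_univ i0)
  -- diagonal sum over erased set
  set D : ℝ := ∑ i ∈ Finset.univ.erase i0, (A i i) ^ 2 with hD
  set E : ℝ := ∑ i ∈ Finset.univ.erase i0, A i i with hE
  have hEa : u + E = a := by
    have h := Finset.add_sum_erase Finset.univ (fun i => A i i) (Finset.mem_univ i0)
    rw [hu, hE, ha]
    simpa using h
  have hcard : ((Finset.univ.erase i0).card : ℝ) = N - 1 := by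
    rw [Finset.card_erase_of_mem (Finset.mem_univ i0), Finset.card_univ,
      Fintype.card_fin]
    have : 1 ≤ n := by omega
    push_cast [Nat.cast_sub this]
    ring
  -- Cauchy–Schwarz on the erased diagonal
  have hCS : E ^ 2 ≤ (N - 1) * D := by
    have := sq_sum_le_card_mul_sum_sq
      (s := Finset.univ.erase i0) (f := fun i => A i i)
    rw [hcard] at this
    exact this
  -- row/column/diagonal decomposition of b
  have hbS : S + (S - u ^ 2) + D ≤ b := by
    have hsplit : b = S + ∑ i ∈ Finset.univ.erase i0, ∑ j, (A i j) ^ 2 := by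
      rw [hb, hS]
      exact (Finset.add_sum_erase _ _ (Finset.mem_univ i0)).symm
    have hrow : ∀ i ∈ Finset.univ.erase i0,
        (A i0 i) ^ 2 + (A i i) ^ 2 ≤ ∑ j, (A i j) ^ 2 := by
      intro i hi
      have hne : i ≠ i0 := Finset.ne_of_mem_erase hi
      have hsub : ({i0, i} : Finset (Fin n)) ⊆ Finset.univ := Finset.subset_univ _
      have hpair : ∑ j ∈ ({i0, i} : Finset (Fin n)), (A i j) ^ 2
          = (A i i0) ^ 2 + (A i i) ^ 2 :=
        Finset.sum_pair (Ne.symm hne)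
      have := Finset.sum_le_sum_of_subset_of_nonneg hsub
        (f := fun j => (A i j) ^ 2) (fun j _ _ => sq_nonneg _)
      rw [hpair, hA i i0] at this
      exact this
    have h2 : ∑ i ∈ Finset.univ.erase i0, ((A i0 i) ^ 2 + (A i i) ^ 2)
        ≤ ∑ i ∈ Finset.univ.erase i0, ∑ j, (A i j) ^ 2 :=
      Finset.sum_le_sum hrow
    have h3 : ∑ i ∈ Finset.univ.erase i0, ((A i0 i) ^ 2 + (A i i) ^ 2)
        = (S - u ^ 2) + D := by
      rw [Finset.sum_add_distrib, hD]
      have : u ^ 2 + ∑ i ∈ Finset.univ.erase i0, (A i0 i) ^ 2 = S := by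
        have h := Finset.add_sum_erase Finset.univ (fun i => (A i0 i) ^ 2)
          (Finset.mem_univ i0)
        rw [hS, hu]
        simpa using h
      have h4 : ∑ i ∈ Finset.univ.erase i0, (A i0 i) ^ 2 = S - u ^ 2 := by
        linarith
      rw [h4]
    rw [hsplit]
    rw [h3] at h2
    linarith
  -- global Cauchy–Schwarz: a² ≤ n b
  have hab : a ^ 2 ≤ N * b := by
    have h1 : a ^ 2 ≤ N * ∑ i, (A i i) ^ 2 := by
      have := sq_sum_le_card_mul_sum_sq
        (s := (Finset.univ : Finset (Fin n))) (f := fun i => A i i)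
      rw [Finset.card_univ, Fintype.card_fin] at this
      rw [ha]
      exact_mod_cast this
    have h2 : ∑ i, (A i i) ^ 2 ≤ b := by
      rw [hb]
      apply Finset.sum_le_sum
      intro i _
      exact Finset.single_le_sum (f := fun j => (A i j) ^ 2)
        (fun j _ => sq_nonneg _) (Finset.mem_univ i)
    nlinarith
  -- the square root
  set q : ℝ := Real.sqrt ((N * b - a ^ 2) / (N - 1)) with hq
  have hq0 : 0 ≤ q := Real.sqrt_nonneg _
  have hq2 : q ^ 2 * (N - 1) = N * b - a ^ 2 := by
    have harg : 0 ≤ (N * b - a ^ 2) / (N - 1) :=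
      div_nonneg (by linarith) (le_of_lt hN1)
    rw [hq, Real.sq_sqrt harg]
    field_simp
  -- key scalar facts
  have hE' : E = a - u := by linarith
  have h1 : 2 * S * (N - 1) - u ^ 2 * (N - 1) + (a - u) ^ 2 ≤ b * (N - 1) := by
    have hD' : (a - u) ^ 2 ≤ (N - 1) * D := by rw [← hE']; exact hCS
    nlinarith [hbS]
  -- |Nu - a| ≤ (N-1) q
  have h3 : (N * u - a) ^ 2 ≤ (N - 1) ^ 2 * q ^ 2 := by
    nlinarith [h1, hSu, hq2]
  have h4 : 0 ≤ |a| * ((N - 1) * q) + a * (N * u - a) := by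
    have habs : |N * u - a| ≤ (N - 1) * q := by
      rw [← Real.sqrt_sq_eq_abs]
      have : (N - 1) * q = Real.sqrt (((N - 1) * q) ^ 2) := by
        rw [Real.sqrt_sq (by positivity)]
      rw [this]
      apply Real.sqrt_le_sqrt
      nlinarith [h3]
    have h5 : a * (N * u - a) ≥ -(|a| * |N * u - a|) := by
      rw [← abs_mul]
      exact neg_abs_le _
    have h6 : |a| * |N * u - a| ≤ |a| * ((N - 1) * q) :=
      mul_le_mul_of_nonneg_left habs (abs_nonneg a)
    linarith
  -- scaled polynomial inequality
  have key : 2 * N ^ 2 * (N - 1) * (u * a - S)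
      ≥ 2 * (N - 1) ^ 2 * (2 * a ^ 2 - N * b - (N - 2) * |a| * q) := by
    have c1 : 0 ≤ N ^ 2 * (b * (N - 1) -
        (2 * S * (N - 1) - u ^ 2 * (N - 1) + (a - u) ^ 2)) := by
      apply mul_nonneg (by positivity)
      linarith
    have c2 : 0 ≤ 2 * (N - 1) * (N - 2) *
        (|a| * ((N - 1) * q) + a * (N * u - a)) := by
      apply mul_nonneg (by nlinarith) h4
    have c3 : 0 ≤ (N - 2) * ((N - 1) ^ 2 * q ^ 2 - (N * u - a) ^ 2) := by
      apply mul_nonneg (by linarith)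
      linarith
    have c4 : (N - 1) * (N - 2) * (q ^ 2 * (N - 1) - (N * b - a ^ 2)) = 0 := by
      rw [hq2]; ring
    nlinarith [c1, c2, c3, c4]
  -- divide through
  rw [ge_iff_le, ← sub_nonneg]
  have heq : u * a - S - (N - 1) / N ^ 2 *
      (2 * a ^ 2 - N * b - (N - 2) * |a| * q)
      = (2 * N ^ 2 * (N - 1) * (u * a - S)
        - 2 * (N - 1) ^ 2 * (2 * a ^ 2 - N * b - (N - 2) * |a| * q))
        / (2 * N ^ 2 * (N - 1)) := by
    field_simp
  have : (0 : ℝ) ≤ u * a - S - (N - 1) / N ^ 2 *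
      (2 * a ^ 2 - N * b - (N - 2) * |a| * q) := by
    rw [heq]
    apply div_nonneg _ (by positivity)
    linarith [key]
  linarith [this]
end

section
/- Let n ≥ 3 and let A = (A_{ij}) be a symmetric n×n real matrix with a = trace(A) and b = ‖A‖_F². Set s = √((n·b − a²)/(n−1)). Then equality holds in the inequality A_{11}·a − ∑_{i=1}^n (A_{1i})² ≥ ((n−1)/n²)·(2a² − n·b − (n−2)·|a|·s) if and only if there exists a sign ε ∈ {−1, +1} with ε·a ≥ 0 such that A is the diagonal matrix diag(a₁, a₂, …, a₂) whose (1,1)-entry is a₁ = a/n − ε·((n−1)/n)·s and whose remaining diagonal entries all equal a₂ = a/n + ε·(1/n)·s. -/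
lemma sum_sq_expand {ι : Type*} [DecidableEq ι] (E : Finset ι) (f : ι → ℝ) (c d : ℝ) :
    ∑ i ∈ E, (c * f i - d)^2
      = c^2 * (∑ i ∈ E, (f i)^2) - (2*c*d) * (∑ i ∈ E, f i) + (E.card : ℝ) * d^2 := by
  rw [Finset.sum_congr rfl (fun i _ => by ring :
      ∀ i ∈ E, (c * f i - d)^2 = c^2*(f i)^2 - (2*c*d)*(f i) + d^2)]
  rw [Finset.sum_add_distrib, Finset.sum_sub_distrib, ← Finset.mul_sum, ← Finset.mul_sum,
    Finset.sum_const, nsmul_eq_mul]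

set_option maxHeartbeats 12000000 in
/-- Hineva's lemma (equality case): for a symmetric `n × n` real matrix `A` (`n ≥ 3`)
with trace `a`, squared Frobenius norm `b`, and `s = √((n·b − a²)/(n−1))`, equality holds
in the Hineva inequality iff there is a sign `ε ∈ {−1, +1}` with `ε·a ≥ 0` such that
`A = diag(a/n − ε·((n−1)/n)·s, a/n + ε·(1/n)·s, …, a/n + ε·(1/n)·s)`. -/
theorem hineva_equality_case (n : ℕ) (hn : 3 ≤ n) (A : Fin n → Fin n → ℝ)
    (hA : ∀ i j, A i j = A j i)
    (a b s : ℝ) (ha : a = ∑ i, A i i) (hb : b = ∑ i, ∑ j, (A i j) ^ 2)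
    (hs : s = Real.sqrt (((n : ℝ) * b - a ^ 2) / ((n : ℝ) - 1))) :
    (A ⟨0, by omega⟩ ⟨0, by omega⟩ * a - ∑ i, (A ⟨0, by omega⟩ i) ^ 2 =
        ((n : ℝ) - 1) / (n : ℝ) ^ 2 *
          (2 * a ^ 2 - (n : ℝ) * b - ((n : ℝ) - 2) * |a| * s)) ↔
      ∃ ε : ℝ, (ε = -1 ∨ ε = 1) ∧ ε * a ≥ 0 ∧
        ∀ i j : Fin n, A i j =
          if i = j then
            (if i = (⟨0, by omega⟩ : Fin n) then a / n - ε * (((n : ℝ) - 1) / n) * s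
             else a / n + ε * (1 / (n : ℝ)) * s)
          else 0 := by
  have hN3 : (3:ℝ) ≤ (n:ℝ) := by exact_mod_cast hn
  have hN1 : (0:ℝ) < (n:ℝ) - 1 := by linarith
  have hN0 : (0:ℝ) < (n:ℝ) := by linarith
  set e0 : Fin n := ⟨0, by omega⟩ with he0
  set E : Finset (Fin n) := Finset.univ.erase e0 with hE
  have hcardE : (E.card : ℝ) = (n:ℝ) - 1 := by
    have h1 : E.card = n - 1 := by
      rw [hE, Finset.card_erase_of_mem (Finset.mem_univ _), Finset.card_univ, Fintype.card_fin]
    have h2 : (1:ℕ) ≤ n := by omega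
    rw [h1]
    push_cast [h2]
    ring
  have hsplit : ∀ f : Fin n → ℝ, ∑ i, f i = f e0 + ∑ i ∈ E, f i := fun f =>
    (Finset.add_sum_erase _ f (Finset.mem_univ e0)).symm
  set x := A e0 e0 with hx
  set r := ∑ i ∈ E, (A e0 i)^2 with hr
  set b' := ∑ i ∈ E, ∑ j ∈ E, (A i j)^2 with hb'
  set Q := ∑ i ∈ E, (((n:ℝ)-1) * A i i - (a - x))^2 with hQdef
  set P := ∑ i ∈ E, ∑ j ∈ E.erase i, (A i j)^2 with hPdef
  have hrow : ∑ i, (A e0 i)^2 = x^2 + r := by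
    rw [hsplit (fun i => (A e0 i)^2)]
  have haa : a = x + ∑ i ∈ E, A i i := by rw [ha, hsplit (fun i => A i i)]
  have ha' : ∑ i ∈ E, A i i = a - x := by linarith
  have hbb : b = x^2 + 2*r + b' := by
    rw [hb, hsplit (fun i => ∑ j, (A i j)^2)]
    have h1 : ∑ i ∈ E, ∑ j, (A i j)^2 = r + b' := by
      rw [hr, hb', ← Finset.sum_add_distrib]
      refine Finset.sum_congr rfl fun i hi => ?_
      rw [hsplit (fun j => (A i j)^2), hA i e0]
    rw [h1, hrow]
    ring
  have hSP : b' = (∑ i ∈ E, (A i i)^2) + P := by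
    rw [hb', hPdef, ← Finset.sum_add_distrib]
    exact Finset.sum_congr rfl fun i hi => (Finset.add_sum_erase _ _ hi).symm
  have expand : Q = ((n:ℝ)-1)^2 * (∑ i ∈ E, (A i i)^2)
      - (2*((n:ℝ)-1)*(a-x))*(∑ i ∈ E, A i i) + ((n:ℝ)-1)*(a-x)^2 := by
    rw [hQdef, sum_sq_expand E (fun i => A i i) ((n:ℝ)-1) (a-x), hcardE]
  have hb'Q : ((n:ℝ)-1)^2*b' = ((n:ℝ)-1)*(a-x)^2 + (Q + ((n:ℝ)-1)^2*P) := by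
    rw [hSP]
    linear_combination (-1 : ℝ)*expand + (2*((n:ℝ)-1)*(a-x))*ha'
  have hr0 : 0 ≤ r := Finset.sum_nonneg fun i _ => sq_nonneg _
  have hQ0 : 0 ≤ Q := Finset.sum_nonneg fun i _ => sq_nonneg _
  have hP0 : 0 ≤ P := Finset.sum_nonneg fun i _ => Finset.sum_nonneg fun j _ => sq_nonneg _
  have hs0 : 0 ≤ s := hs ▸ Real.sqrt_nonneg _
  have haux1 : (0:ℝ) ≤ 2*(n:ℝ)*((n:ℝ)-1)^2*r :=
    mul_nonneg (mul_nonneg (by linarith) (sq_nonneg _)) hr0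
  have haux2 : (0:ℝ) ≤ (n:ℝ)*(Q + ((n:ℝ)-1)^2*P) :=
    mul_nonneg hN0.le (add_nonneg hQ0 (mul_nonneg (sq_nonneg _) hP0))
  have hkey : ((n:ℝ)-1)^2*((n:ℝ)*b - a^2)
      = ((n:ℝ)-1)*(((n:ℝ)-1)*x - (a-x))^2 + 2*(n:ℝ)*((n:ℝ)-1)^2*r
        + (n:ℝ)*(Q + ((n:ℝ)-1)^2*P) := by
    linear_combination (n:ℝ)*((n:ℝ)-1)^2*hbb + (n:ℝ)*hb'Q
  have haux3 : (0:ℝ) ≤ ((n:ℝ)-1)*(((n:ℝ)-1)*x - (a-x))^2 :=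
    mul_nonneg (by linarith) (sq_nonneg _)
  have hnb : 0 ≤ (n:ℝ)*b - a^2 := by
    by_contra hc
    push_neg at hc
    have hprod : 0 < ((n:ℝ)-1)^2 * (a^2 - (n:ℝ)*b) :=
      mul_pos (pow_pos hN1 2) (by linarith)
    linarith [hkey, haux1, haux2, haux3, hprod]
  have hs2 : ((n:ℝ)-1) * s^2 = (n:ℝ)*b - a^2 := by
    rw [hs, Real.sq_sqrt (div_nonneg hnb (le_of_lt hN1))]
    field_simp
  have hI : ((n:ℝ)-1)^3*s^2 - ((n:ℝ)-1)*((n:ℝ)*x - a)^2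
      = 2*(n:ℝ)*((n:ℝ)-1)^2*r + (n:ℝ)*(Q + ((n:ℝ)-1)^2*P) := by
    linear_combination ((n:ℝ)-1)^2*hs2 + (n:ℝ)*((n:ℝ)-1)^2*hbb + (n:ℝ)*hb'Q
  have hbound : ((n:ℝ)*x - a)^2 ≤ (((n:ℝ)-1)*s)^2 := by
    by_contra hc
    push_neg at hc
    have hprod : 0 < ((n:ℝ)-1) * (((n:ℝ)*x - a)^2 - (((n:ℝ)-1)*s)^2) :=
      mul_pos hN1 (by linarith)
    linarith [hI, haux1, haux2, hprod]
  have hub : (n:ℝ)*x - a ≤ ((n:ℝ)-1)*s := by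
    by_contra hc
    push_neg at hc
    have hc2 : 0 < (n:ℝ)*x - a + ((n:ℝ)-1)*s := by
      have := mul_nonneg hN1.le hs0
      linarith
    have hprod : 0 < ((n:ℝ)*x - a - ((n:ℝ)-1)*s) * ((n:ℝ)*x - a + ((n:ℝ)-1)*s) :=
      mul_pos (by linarith) hc2
    linarith [hbound, hprod]
  have hlb : -(((n:ℝ)-1)*s) ≤ (n:ℝ)*x - a := by
    by_contra hc
    push_neg at hc
    have hc2 : 0 < ((n:ℝ)-1)*s - ((n:ℝ)*x - a) := by
      have := mul_nonneg hN1.le hs0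
      linarith
    have hprod : 0 < (-(((n:ℝ)-1)*s) - ((n:ℝ)*x - a)) * (((n:ℝ)-1)*s - ((n:ℝ)*x - a)) :=
      mul_pos (by linarith) hc2
    linarith [hbound, hprod]
  -- helper for constructing the conclusion
  have hfin : ∀ ε : ℝ, (ε = -1 ∨ ε = 1) → ε * a ≥ 0 →
      (n:ℝ) * x = a - ε*((n:ℝ)-1)*s → r = 0 → Q = 0 → P = 0 →
      ∃ ε : ℝ, (ε = -1 ∨ ε = 1) ∧ ε * a ≥ 0 ∧
        ∀ i j : Fin n, A i j =
          if i = j then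
            (if i = e0 then a / n - ε * (((n : ℝ) - 1) / n) * s
             else a / n + ε * (1 / (n : ℝ)) * s)
          else 0 := by
    intro ε hεpm hεa hxv hrz hQz hPz
    have hxval : x = a / n - ε * (((n : ℝ) - 1) / n) * s := by
      field_simp
      linear_combination hxv
    rw [hr] at hrz
    rw [hQdef] at hQz
    rw [hPdef] at hPz
    have h0i : ∀ i, i ≠ e0 → A e0 i = 0 := by
      intro i hi
      have hiE : i ∈ E := Finset.mem_erase.mpr ⟨hi, Finset.mem_univ i⟩
      have h1 := (Finset.sum_eq_zero_iff_of_nonneg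
        (fun j _ => sq_nonneg (A e0 j))).mp hrz i hiE
      exact (pow_eq_zero_iff (two_ne_zero)).mp h1
    have hdiag : ∀ i, i ≠ e0 → A i i = a / n + ε * (1 / (n : ℝ)) * s := by
      intro i hi
      have hiE : i ∈ E := Finset.mem_erase.mpr ⟨hi, Finset.mem_univ i⟩
      have h1 := (Finset.sum_eq_zero_iff_of_nonneg
        (fun j _ => sq_nonneg (((n:ℝ)-1) * A j j - (a - x)))).mp hQz i hiE
      have h2 : ((n:ℝ)-1) * A i i - (a - x) = 0 := (pow_eq_zero_iff (two_ne_zero)).mp h1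
      have h5 : ((n:ℝ)-1)*((n:ℝ)*A i i) = ((n:ℝ)-1)*(a + ε*s) := by
        linear_combination (n:ℝ)*h2 - hxv
      have h6 : (n:ℝ)*A i i = a + ε*s := mul_left_cancel₀ hN1.ne' h5
      field_simp
      linear_combination h6
    have hoff : ∀ i j, i ≠ e0 → j ≠ e0 → i ≠ j → A i j = 0 := by
      intro i j hi hj hij
      have hiE : i ∈ E := Finset.mem_erase.mpr ⟨hi, Finset.mem_univ i⟩
      have hjE : j ∈ E.erase i := Finset.mem_erase.mpr
        ⟨fun h => hij h.symm, Finset.mem_erase.mpr ⟨hj, Finset.mem_univ j⟩⟩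
      have h1 := (Finset.sum_eq_zero_iff_of_nonneg
        (fun k _ => Finset.sum_nonneg fun l _ => sq_nonneg (A k l))).mp hPz i hiE
      have h2 := (Finset.sum_eq_zero_iff_of_nonneg
        (fun l _ => sq_nonneg (A i l))).mp h1 j hjE
      exact (pow_eq_zero_iff (two_ne_zero)).mp h2
    refine ⟨ε, hεpm, hεa, fun i j => ?_⟩
    by_cases hij : i = j
    · subst hij
      rw [if_pos rfl]
      by_cases hi0 : i = e0
      · subst hi0
        rw [if_pos rfl, ← hx]
        exact hxval
      · rw [if_neg hi0]
        exact hdiag i hi0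
    · rw [if_neg hij]
      by_cases hi0 : i = e0
      · subst hi0
        exact h0i j (fun h => hij h.symm)
      · by_cases hj0 : j = e0
        · subst hj0
          rw [hA i e0]
          exact h0i i hi0
        · exact hoff i j hi0 hj0 hij
  constructor
  · intro heq
    rw [hrow] at heq
    rcases le_or_gt 0 a with hage | halt
    · rw [abs_of_nonneg hage] at heq
      have heq' : (n:ℝ)^2*(x*a - (x^2+r))
          = ((n:ℝ)-1)*(2*a^2 - (n:ℝ)*b - ((n:ℝ)-2)*a*s) := by
        rw [heq]; field_simp
      have star : (n:ℝ)^2*(Q + ((n:ℝ)-1)^2*P) + ((n:ℝ)-1)*((n:ℝ)-2)*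
          (((2*(n:ℝ)-1)*a + ((n:ℝ)-1)*s - (n:ℝ)*x) * ((n:ℝ)*x - a + ((n:ℝ)-1)*s)) = 0 := by
        linear_combination 2*((n:ℝ)-1)^2*heq' + ((n:ℝ)-1)^2*((n:ℝ)-2)*hs2
          - (n:ℝ)^2*((n:ℝ)-1)^2*hbb - (n:ℝ)^2*hb'Q
      have hT1 : 0 ≤ (2*(n:ℝ)-1)*a + ((n:ℝ)-1)*s - (n:ℝ)*x := by
        linarith [hub, mul_nonneg (by linarith : (0:ℝ) ≤ (n:ℝ)-1) hage]
      have hT2 : 0 ≤ (n:ℝ)*x - a + ((n:ℝ)-1)*s := by linarith [hlb]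
      have hTT : 0 ≤ ((2*(n:ℝ)-1)*a + ((n:ℝ)-1)*s - (n:ℝ)*x) * ((n:ℝ)*x - a + ((n:ℝ)-1)*s) :=
        mul_nonneg hT1 hT2
      have hTTn : 0 ≤ ((n:ℝ)-1)*((n:ℝ)-2)*
          (((2*(n:ℝ)-1)*a + ((n:ℝ)-1)*s - (n:ℝ)*x) * ((n:ℝ)*x - a + ((n:ℝ)-1)*s)) :=
        mul_nonneg (mul_nonneg (by linarith) (by linarith)) hTT
      have hD0 : 0 ≤ Q + ((n:ℝ)-1)^2*P :=
        add_nonneg hQ0 (mul_nonneg (sq_nonneg _) hP0)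
      have hDeq : (n:ℝ)^2*(Q + ((n:ℝ)-1)^2*P) = 0 :=
        le_antisymm (by linarith) (mul_nonneg (sq_nonneg _) hD0)
      have hDz : Q + ((n:ℝ)-1)^2*P = 0 :=
        (mul_eq_zero.mp hDeq).resolve_left (pow_ne_zero 2 hN0.ne')
      have hQz : Q = 0 := by
        have := mul_nonneg (sq_nonneg ((n:ℝ)-1)) hP0
        linarith
      have hPz : P = 0 := by
        have h7 : ((n:ℝ)-1)^2*P = 0 := by linarith
        exact (mul_eq_zero.mp h7).resolve_left (pow_ne_zero 2 hN1.ne')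
      have hTz : ((2*(n:ℝ)-1)*a + ((n:ℝ)-1)*s - (n:ℝ)*x) * ((n:ℝ)*x - a + ((n:ℝ)-1)*s) = 0 := by
        have h1 : ((n:ℝ)-1)*((n:ℝ)-2)*
            (((2*(n:ℝ)-1)*a + ((n:ℝ)-1)*s - (n:ℝ)*x) * ((n:ℝ)*x - a + ((n:ℝ)-1)*s)) = 0 := by
          linarith
        exact (mul_eq_zero.mp h1).resolve_left
          (ne_of_gt (mul_pos (by linarith) (by linarith)))
      rcases mul_eq_zero.mp hTz with h | h
      · -- T1 = 0 : a = 0, ε = -1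
        have h5 : ((n:ℝ)-1)*a ≤ 0 := by linarith [hub, h]
        have h6 : 0 ≤ ((n:ℝ)-1)*a := mul_nonneg (by linarith) hage
        have ha0' : a = 0 :=
          (mul_eq_zero.mp (le_antisymm h5 h6)).resolve_left hN1.ne'
        have h' : (n:ℝ)*x - a - ((n:ℝ)-1)*s = 0 := by
          rw [ha0'] at h ⊢
          linarith
        have h2 : (2*(n:ℝ)*((n:ℝ)-1)^2)*r = 0 := by
          linear_combination (-1 : ℝ)*hI - (n:ℝ)*hDz
            - (((n:ℝ)-1)*((n:ℝ)*x - a + ((n:ℝ)-1)*s))*h'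
        have hrz : r = 0 := (mul_eq_zero.mp h2).resolve_left
          (ne_of_gt (mul_pos (by linarith) (pow_pos hN1 2)))
        refine hfin (-1) (Or.inl rfl) (by rw [ha0']; norm_num) ?_ hrz hQz hPz
        rw [ha0'] at h' ⊢
        linarith
      · -- T2 = 0 : ε = 1
        have h2 : (2*(n:ℝ)*((n:ℝ)-1)^2)*r = 0 := by
          linear_combination (-1 : ℝ)*hI - (n:ℝ)*hDz
            - (((n:ℝ)-1)*((n:ℝ)*x - a - ((n:ℝ)-1)*s))*h
        have hrz : r = 0 := (mul_eq_zero.mp h2).resolve_left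
          (ne_of_gt (mul_pos (by linarith) (pow_pos hN1 2)))
        refine hfin 1 (Or.inr rfl) (by linarith) ?_ hrz hQz hPz
        linarith [h]
    · rw [abs_of_nonpos (le_of_lt halt)] at heq
      have heq' : (n:ℝ)^2*(x*a - (x^2+r))
          = ((n:ℝ)-1)*(2*a^2 - (n:ℝ)*b - ((n:ℝ)-2)*(-a)*s) := by
        rw [heq]; field_simp
      have star : (n:ℝ)^2*(Q + ((n:ℝ)-1)^2*P) + ((n:ℝ)-1)*((n:ℝ)-2)*
          ((((n:ℝ)-1)*s - (n:ℝ)*x + a) * ((n:ℝ)*x - (2*(n:ℝ)-1)*a + ((n:ℝ)-1)*s)) = 0 := by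
        linear_combination 2*((n:ℝ)-1)^2*heq' + ((n:ℝ)-1)^2*((n:ℝ)-2)*hs2
          - (n:ℝ)^2*((n:ℝ)-1)^2*hbb - (n:ℝ)^2*hb'Q
      have hT1 : 0 ≤ ((n:ℝ)-1)*s - (n:ℝ)*x + a := by linarith [hub]
      have hT2 : 0 ≤ (n:ℝ)*x - (2*(n:ℝ)-1)*a + ((n:ℝ)-1)*s := by
        linarith [hlb, mul_nonneg (by linarith : (0:ℝ) ≤ (n:ℝ)-1) (le_of_lt (neg_pos.mpr halt))]
      have hTT : 0 ≤ (((n:ℝ)-1)*s - (n:ℝ)*x + a) * ((n:ℝ)*x - (2*(n:ℝ)-1)*a + ((n:ℝ)-1)*s) :=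
        mul_nonneg hT1 hT2
      have hTTn : 0 ≤ ((n:ℝ)-1)*((n:ℝ)-2)*
          ((((n:ℝ)-1)*s - (n:ℝ)*x + a) * ((n:ℝ)*x - (2*(n:ℝ)-1)*a + ((n:ℝ)-1)*s)) :=
        mul_nonneg (mul_nonneg (by linarith) (by linarith)) hTT
      have hD0 : 0 ≤ Q + ((n:ℝ)-1)^2*P :=
        add_nonneg hQ0 (mul_nonneg (sq_nonneg _) hP0)
      have hDeq : (n:ℝ)^2*(Q + ((n:ℝ)-1)^2*P) = 0 :=
        le_antisymm (by linarith) (mul_nonneg (sq_nonneg _) hD0)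
      have hDz : Q + ((n:ℝ)-1)^2*P = 0 :=
        (mul_eq_zero.mp hDeq).resolve_left (pow_ne_zero 2 hN0.ne')
      have hQz : Q = 0 := by
        have := mul_nonneg (sq_nonneg ((n:ℝ)-1)) hP0
        linarith
      have hPz : P = 0 := by
        have h7 : ((n:ℝ)-1)^2*P = 0 := by linarith
        exact (mul_eq_zero.mp h7).resolve_left (pow_ne_zero 2 hN1.ne')
      have hTz : (((n:ℝ)-1)*s - (n:ℝ)*x + a) * ((n:ℝ)*x - (2*(n:ℝ)-1)*a + ((n:ℝ)-1)*s) = 0 := by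
        have h1 : ((n:ℝ)-1)*((n:ℝ)-2)*
            ((((n:ℝ)-1)*s - (n:ℝ)*x + a) * ((n:ℝ)*x - (2*(n:ℝ)-1)*a + ((n:ℝ)-1)*s)) = 0 := by
          linarith
        exact (mul_eq_zero.mp h1).resolve_left
          (ne_of_gt (mul_pos (by linarith) (by linarith)))
      have hT1z : ((n:ℝ)-1)*s - (n:ℝ)*x + a = 0 := by
        rcases mul_eq_zero.mp hTz with h | h
        · exact h
        · exfalso
          have h8 : 0 ≤ ((n:ℝ)-1)*a := by linarith [hlb, h]
          linarith [h8, mul_pos hN1 (neg_pos.mpr halt)]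
      have h' : (n:ℝ)*x - a - ((n:ℝ)-1)*s = 0 := by linarith
      have h2 : (2*(n:ℝ)*((n:ℝ)-1)^2)*r = 0 := by
        linear_combination (-1 : ℝ)*hI - (n:ℝ)*hDz
          - (((n:ℝ)-1)*((n:ℝ)*x - a + ((n:ℝ)-1)*s))*h'
      have hrz : r = 0 := (mul_eq_zero.mp h2).resolve_left
        (ne_of_gt (mul_pos (by linarith) (pow_pos hN1 2)))
      refine hfin (-1) (Or.inl rfl) (by linarith) ?_ hrz hQz hPz
      linarith
  · rintro ⟨ε, hεpm, hεa, hAv⟩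
    have hA00 : x = a / n - ε * (((n : ℝ) - 1) / n) * s := by
      rw [hx]
      have h0 := hAv e0 e0
      rwa [if_pos rfl, if_pos rfl] at h0
    have h0i : ∀ i, i ≠ e0 → A e0 i = 0 := by
      intro i hi
      have h0 := hAv e0 i
      rwa [if_neg (fun h => hi h.symm)] at h0
    have hdiagv : ∀ i, i ≠ e0 → A i i = a / n + ε * (1 / (n : ℝ)) * s := by
      intro i hi
      have h0 := hAv i i
      rwa [if_pos rfl, if_neg hi] at h0
    have hoffv : ∀ i j, i ≠ j → A i j = 0 := by
      intro i j hij
      have h0 := hAv i j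
      rwa [if_neg hij] at h0
    have hrz : r = 0 := by
      rw [hr]
      exact Finset.sum_eq_zero fun i hi => by
        rw [h0i i (Finset.mem_erase.mp hi).1]; ring
    have hPz : P = 0 := by
      rw [hPdef]
      refine Finset.sum_eq_zero fun i hi => Finset.sum_eq_zero fun j hj => ?_
      rw [hoffv i j (fun h => (Finset.mem_erase.mp hj).1 h.symm)]
      ring
    have hxv : (n:ℝ)*x = a - ε*((n:ℝ)-1)*s := by
      rw [hA00]
      field_simp
    have hQz : Q = 0 := by
      rw [hQdef]
      refine Finset.sum_eq_zero fun i hi => ?_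
      have hz : ((n:ℝ)-1) * A i i - (a - x) = 0 := by
        rw [hdiagv i (Finset.mem_erase.mp hi).1]
        have h9 : (n:ℝ) * (((n:ℝ)-1) * (a / n + ε * (1 / (n : ℝ)) * s) - (a - x)) = 0 := by
          field_simp
          linear_combination hxv
        exact (mul_eq_zero.mp h9).resolve_left hN0.ne'
      rw [hz]
      ring
    have hbval : ((n:ℝ)-1)^2*b' = ((n:ℝ)-1)*(a-x)^2 := by
      rw [hb'Q, hQz, hPz]
      ring
    rw [hrow]
    rcases hεpm with rfl | rfl
    · -- ε = -1, a ≤ 0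
      have habs : |a| = -a := abs_of_nonpos (by linarith [hεa])
      rw [habs]
      have hb'3 : (n:ℝ)^2*b' = ((n:ℝ)-1)*(a + (-1)*s)^2 := by
        have hax : (n:ℝ)*(a - x) = ((n:ℝ)-1)*(a + (-1:ℝ)*s) := by linear_combination (-1:ℝ)*hxv
        have hb'2 : ((n:ℝ)-1)^2*((n:ℝ)^2*b') = ((n:ℝ)-1)^2*(((n:ℝ)-1)*(a + (-1:ℝ)*s)^2) := by
          linear_combination (n:ℝ)^2*hbval
            + (((n:ℝ)-1)*((n:ℝ)*(a-x) + ((n:ℝ)-1)*(a + (-1:ℝ)*s)))*hax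
        exact mul_left_cancel₀ (pow_ne_zero 2 hN1.ne') hb'2
      have hNb : (n:ℝ)^2*((n:ℝ)*b) = (n:ℝ)^2*(a^2 + ((n:ℝ)-1)*s^2) := by
        linear_combination (n:ℝ)^3*hbb + (n:ℝ)*hb'3 + 2*(n:ℝ)^3*hrz
          + ((n:ℝ)*((n:ℝ)*x + a - (-1:ℝ)*((n:ℝ)-1)*s))*hxv
      have hbtot : (n:ℝ)*b = a^2 + ((n:ℝ)-1)*s^2 :=
        mul_left_cancel₀ (pow_ne_zero 2 hN0.ne') hNb
      rw [div_mul_eq_mul_div, eq_div_iff (by positivity : ((n:ℝ)^2) ≠ 0)]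
      linear_combination ((n:ℝ)-1)*hbtot - (n:ℝ)^2*hrz
        + (-(n:ℝ)*x + ((n:ℝ)-1)*a + (-1:ℝ)*((n:ℝ)-1)*s)*hxv
    · -- ε = 1, a ≥ 0
      have habs : |a| = a := abs_of_nonneg (by linarith [hεa])
      rw [habs]
      have hb'3 : (n:ℝ)^2*b' = ((n:ℝ)-1)*(a + s)^2 := by
        have hax : (n:ℝ)*(a - x) = ((n:ℝ)-1)*(a + s) := by linear_combination (-1:ℝ)*hxv
        have hb'2 : ((n:ℝ)-1)^2*((n:ℝ)^2*b') = ((n:ℝ)-1)^2*(((n:ℝ)-1)*(a + s)^2) := by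
          linear_combination (n:ℝ)^2*hbval
            + (((n:ℝ)-1)*((n:ℝ)*(a-x) + ((n:ℝ)-1)*(a + s)))*hax
        exact mul_left_cancel₀ (pow_ne_zero 2 hN1.ne') hb'2
      have hNb : (n:ℝ)^2*((n:ℝ)*b) = (n:ℝ)^2*(a^2 + ((n:ℝ)-1)*s^2) := by
        linear_combination (n:ℝ)^3*hbb + (n:ℝ)*hb'3 + 2*(n:ℝ)^3*hrz
          + ((n:ℝ)*((n:ℝ)*x + a - ((n:ℝ)-1)*s))*hxv
      have hbtot : (n:ℝ)*b = a^2 + ((n:ℝ)-1)*s^2 :=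
        mul_left_cancel₀ (pow_ne_zero 2 hN0.ne') hNb
      rw [div_mul_eq_mul_div, eq_div_iff (by positivity : ((n:ℝ)^2) ≠ 0)]
      linear_combination ((n:ℝ)-1)*hbtot - (n:ℝ)^2*hrz
        + (-(n:ℝ)*x + ((n:ℝ)-1)*a + ((n:ℝ)-1)*s)*hxv
end

section
/- Let n ≥ 2, r ≥ 1, and let T¹, …, Tʳ be symmetric n×n real matrices. Set a = ∑_{α=1}^r trace(T^α)² and b = ∑_{α=1}^r ‖T^α‖_F². Then ∑_{α=1}^r ( T^α_{11}·trace(T^α) − ∑_{j=1}^n (T^α_{1j})² ) ≥ ((n−1)/n²)·( 2a − n·b − (n−2)·√a·√((n·b − a)/(n−1)) ). -/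
lemma hineva_core (N t x q f : ℝ) (hN : 2 ≤ N) (hq : 0 ≤ q)
    (hf : x^2 + 2*q + (t-x)^2/(N-1) ≤ f) :
    x*t - x^2 - q ≥ ((N-1)/N^2)*(2*t^2 - N*f)
      - ((N-2)/N^2) * Real.sqrt (t^2) * Real.sqrt ((N-1)*(N*f - t^2)) := by
  have hN1 : (0:ℝ) < N - 1 := by linarith
  have hf' : (N-1)*x^2 + 2*(N-1)*q + (t-x)^2 ≤ (N-1)*f := by
    have h := (div_le_iff₀ hN1).mp (by linarith : (t-x)^2/(N-1) ≤ f - x^2 - 2*q)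
    nlinarith [h]
  have hD2 : (N*x - t)^2 ≤ (N-1)*(N*f - t^2) := by
    nlinarith [mul_le_mul_of_nonneg_left hf' (by linarith : (0:ℝ) ≤ N),
      mul_nonneg (mul_nonneg (by linarith : (0:ℝ) ≤ N) hN1.le) hq]
  set A := Real.sqrt (t^2) with hAdef
  set D := Real.sqrt ((N-1)*(N*f - t^2)) with hDdef
  have hA : A = |t| := Real.sqrt_sq_eq_abs t
  have hAnn : 0 ≤ A := Real.sqrt_nonneg _
  have hDnn : 0 ≤ D := Real.sqrt_nonneg _
  have hD2' : D^2 = (N-1)*(N*f - t^2) :=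
    Real.sq_sqrt (le_trans (sq_nonneg _) hD2)
  have habs : |N*x - t| ≤ D := by
    rw [← Real.sqrt_sq_eq_abs]
    exact Real.sqrt_le_sqrt hD2
  have hAD : -(t*(N*x - t)) ≤ A * D := by
    calc -(t*(N*x-t)) ≤ |t*(N*x-t)| := neg_le_abs _
      _ = |t| * |N*x-t| := abs_mul _ _
      _ ≤ |t| * D := by exact mul_le_mul_of_nonneg_left habs (abs_nonneg t)
      _ = A * D := by rw [hA]
  have key : N^2*(x*t - x^2 - q) ≥ (N-1)*(2*t^2 - N*f) - (N-2)*(A*D) := by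
    have h1 : 0 ≤ (N-2)*(N*x*t - t^2 + A*D) :=
      mul_nonneg (by linarith) (by nlinarith [hAD])
    nlinarith [h1, hf', mul_nonneg (mul_nonneg (by linarith : (0:ℝ) ≤ N) (by linarith : (0:ℝ) ≤ N-2)) hq]
  have hN2 : (0:ℝ) < N^2 := by positivity
  rw [ge_iff_le, show ((N-1)/N^2)*(2*t^2 - N*f) - ((N-2)/N^2)*A*D
      = ((N-1)*(2*t^2 - N*f) - (N-2)*(A*D))/N^2 by ring, div_le_iff₀ hN2]
  nlinarith [key]

set_option maxHeartbeats 1000000 in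
/-- Algebraic core of Theorem 3.1: for symmetric `n × n` real matrices `T¹, …, Tʳ`,
with `a = ∑_α (trace T^α)²` and `b = ∑_α ‖T^α‖²`,
`∑_α (T^α₁₁·trace T^α − ∑_j (T^α₁ⱼ)²)
  ≥ ((n−1)/n²)·(2a − n·b − (n−2)·√a·√((n·b − a)/(n−1)))`. -/
theorem hineva_sum_aggregated (n r : ℕ) (hn : 2 ≤ n) (hr : 1 ≤ r)
    (T : Fin r → Fin n → Fin n → ℝ)
    (hT : ∀ α i j, T α i j = T α j i)
    (a b : ℝ)
    (ha : a = ∑ α, (∑ i, T α i i) ^ 2)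
    (hb : b = ∑ α, ∑ i, ∑ j, (T α i j) ^ 2) :
    ∑ α, (T α ⟨0, by omega⟩ ⟨0, by omega⟩ * (∑ i, T α i i)
        - ∑ j, (T α ⟨0, by omega⟩ j) ^ 2) ≥
      ((n : ℝ) - 1) / (n : ℝ) ^ 2 *
        (2 * a - (n : ℝ) * b -
          ((n : ℝ) - 2) * Real.sqrt a *
            Real.sqrt (((n : ℝ) * b - a) / ((n : ℝ) - 1))) := by
  classical
  set N : ℝ := (n : ℝ) with hNdef
  have hN : 2 ≤ N := by rw [hNdef]; exact_mod_cast hn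
  have hN1 : (0:ℝ) < N - 1 := by linarith
  set e0 : Fin n := ⟨0, by omega⟩ with he0
  set t : Fin r → ℝ := fun α => ∑ i, T α i i with htdef
  set x : Fin r → ℝ := fun α => T α e0 e0 with hxdef
  set s : Fin r → ℝ := fun α => ∑ j, (T α e0 j)^2 with hsdef
  set f : Fin r → ℝ := fun α => ∑ i, ∑ j, (T α i j)^2 with hfdef
  have ha' : a = ∑ α, t α ^ 2 := by rw [ha]
  have hb' : b = ∑ α, f α := by rw [hb]
  -- per-α facts
  have hq : ∀ α, x α ^ 2 ≤ s α := by
    intro α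
    show (T α e0 e0)^2 ≤ ∑ j, (T α e0 j)^2
    exact Finset.single_le_sum (f := fun j => (T α e0 j)^2)
      (fun j _ => sq_nonneg _) (Finset.mem_univ e0)
  have hfb : ∀ α, x α ^2 + 2*(s α - x α ^2) + (t α - x α)^2/(N-1) ≤ f α := by
    intro α
    have hsplit : f α = (∑ i ∈ Finset.univ.erase e0, ∑ j, (T α i j)^2) + s α := by
      show (∑ i, ∑ j, (T α i j)^2) = _
      exact (Finset.sum_erase_add _ _ (Finset.mem_univ e0)).symm
    have hrest : (∑ i ∈ Finset.univ.erase e0, ((T α i e0)^2 + (T α i i)^2))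
        ≤ ∑ i ∈ Finset.univ.erase e0, ∑ j, (T α i j)^2 := by
      apply Finset.sum_le_sum
      intro i hi
      have hne : e0 ≠ i := fun h => (Finset.mem_erase.mp hi).1 h.symm
      calc (T α i e0)^2 + (T α i i)^2 = ∑ j ∈ ({e0, i} : Finset (Fin n)), (T α i j)^2 := by
            rw [Finset.sum_pair hne]
        _ ≤ ∑ j, (T α i j)^2 :=
            Finset.sum_le_sum_of_subset_of_nonneg (Finset.subset_univ _)
              (fun j _ _ => sq_nonneg _)
    have hoff : ∑ i ∈ Finset.univ.erase e0, (T α i e0)^2 = s α - x α ^2 := by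
      have h0 : ∑ i ∈ Finset.univ.erase e0, (T α e0 i)^2 + (T α e0 e0)^2
          = ∑ i, (T α e0 i)^2 :=
        Finset.sum_erase_add _ _ (Finset.mem_univ e0)
      have heq : ∑ i ∈ Finset.univ.erase e0, (T α i e0)^2
          = ∑ i ∈ Finset.univ.erase e0, (T α e0 i)^2 :=
        Finset.sum_congr rfl (fun i _ => by rw [hT α i e0])
      rw [heq]
      show _ = (∑ j, (T α e0 j)^2) - (T α e0 e0)^2
      linarith [h0]
    have hdiag : (t α - x α)^2/(N-1) ≤ ∑ i ∈ Finset.univ.erase e0, (T α i i)^2 := by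
      have hcs := Finset.sum_mul_sq_le_sq_mul_sq (Finset.univ.erase e0)
        (fun i => T α i i) (fun _ => (1:ℝ))
      have hcard : ((Finset.univ.erase e0).card : ℝ) = N - 1 := by
        rw [Finset.card_erase_of_mem (Finset.mem_univ e0), Finset.card_univ, Fintype.card_fin]
        rw [hNdef]; push_cast [Nat.cast_sub (by omega : 1 ≤ n)]; ring
      have hsum : ∑ i ∈ Finset.univ.erase e0, T α i i = t α - x α := by
        have h0 : ∑ i ∈ Finset.univ.erase e0, T α i i + T α e0 e0 = ∑ i, T α i i :=
          Finset.sum_erase_add _ _ (Finset.mem_univ e0)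
        show _ = (∑ i, T α i i) - T α e0 e0
        linarith [h0]
      simp only [mul_one, one_pow, Finset.sum_const, nsmul_eq_mul] at hcs
      rw [hsum] at hcs
      rw [div_le_iff₀ hN1]
      calc (t α - x α)^2 ≤ (∑ i ∈ Finset.univ.erase e0, (T α i i)^2)
            * ((Finset.univ.erase e0).card : ℝ) := hcs
        _ = (∑ i ∈ Finset.univ.erase e0, (T α i i)^2) * (N-1) := by rw [hcard]
    have hsum2 : (s α - x α ^2) + (t α - x α)^2/(N-1)
        ≤ ∑ i ∈ Finset.univ.erase e0, ∑ j, (T α i j)^2 := by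
      calc (s α - x α ^2) + (t α - x α)^2/(N-1)
          ≤ (∑ i ∈ Finset.univ.erase e0, (T α i e0)^2)
            + ∑ i ∈ Finset.univ.erase e0, (T α i i)^2 := by rw [hoff]; linarith [hdiag]
        _ = ∑ i ∈ Finset.univ.erase e0, ((T α i e0)^2 + (T α i i)^2) := by
            rw [Finset.sum_add_distrib]
        _ ≤ _ := hrest
    rw [hsplit]; linarith
  -- nonnegativity facts
  have hvnn : ∀ α, 0 ≤ (N-1)*(N*f α - t α ^2) := by
    intro α
    have h := hfb α
    have hqα : 0 ≤ s α - x α ^2 := by linarith [hq α]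
    have hf' : (N-1)*(x α)^2 + 2*(N-1)*(s α - x α ^2) + (t α - x α)^2 ≤ (N-1)*(f α) := by
      have h2 := (div_le_iff₀ hN1).mp
        (by linarith : (t α - x α)^2/(N-1) ≤ f α - x α ^2 - 2*(s α - x α ^2))
      nlinarith [h2]
    nlinarith [mul_le_mul_of_nonneg_left hf' (by linarith : (0:ℝ) ≤ N),
      mul_nonneg (mul_nonneg (by linarith : (0:ℝ) ≤ N) hN1.le) hqα, sq_nonneg (N * x α - t α)]
  have hanm : 0 ≤ a := by rw [ha']; positivity
  have h1 : ∑ α, (N-1)*(N*f α - t α ^2) = (N-1)*(N*b - a) := by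
    rw [ha', hb', Finset.mul_sum, ← Finset.sum_sub_distrib, Finset.mul_sum]
  have hba : 0 ≤ N*b - a := by
    have h2 : 0 ≤ ∑ α, (N-1)*(N*f α - t α ^2) := Finset.sum_nonneg (fun α _ => hvnn α)
    rw [h1] at h2
    nlinarith [h2]
  -- per-α inequality
  have hper : ∀ α, x α * t α - s α ≥ ((N-1)/N^2)*(2*(t α)^2 - N*f α)
      - ((N-2)/N^2) * Real.sqrt ((t α)^2) * Real.sqrt ((N-1)*(N*f α - (t α)^2)) := by
    intro α
    have := hineva_core N (t α) (x α) (s α - x α ^2) (f α) hN (by linarith [hq α]) (hfb α)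
    linarith [this]
  -- Cauchy-Schwarz on the sqrt terms
  set S : ℝ := ∑ α, Real.sqrt ((t α)^2) * Real.sqrt ((N-1)*(N*f α - (t α)^2)) with hSdef
  have hSnn : 0 ≤ S := Finset.sum_nonneg
    (fun α _ => mul_nonneg (Real.sqrt_nonneg _) (Real.sqrt_nonneg _))
  have hS : S ≤ Real.sqrt a * Real.sqrt ((N-1)*(N*b-a)) := by
    have hcs := Finset.sum_mul_sq_le_sq_mul_sq Finset.univ
      (fun α => Real.sqrt ((t α)^2)) (fun α => Real.sqrt ((N-1)*(N*f α - (t α)^2)))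
    have he1 : ∑ α, (Real.sqrt ((t α)^2))^2 = a := by
      rw [ha']; exact Finset.sum_congr rfl (fun α _ => Real.sq_sqrt (sq_nonneg _))
    have he2 : ∑ α, (Real.sqrt ((N-1)*(N*f α - (t α)^2)))^2 = (N-1)*(N*b-a) := by
      rw [← h1]
      exact Finset.sum_congr rfl (fun α _ => Real.sq_sqrt (hvnn α))
    rw [he1, he2] at hcs
    have hle := Real.le_sqrt hSnn (by positivity : (0:ℝ) ≤ a * ((N-1)*(N*b-a)))
    have hS2 : S ≤ Real.sqrt (a * ((N-1)*(N*b-a))) := hle.mpr (by nlinarith [hcs])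
    rwa [Real.sqrt_mul hanm] at hS2
  -- identify goal RHS
  have hrhs : ((N-1)/N^2) * (2*a - N*b - (N-2) * Real.sqrt a
        * Real.sqrt ((N*b - a)/(N-1)))
      = ((N-1)/N^2)*(2*a - N*b) - ((N-2)/N^2) * (Real.sqrt a * Real.sqrt ((N-1)*(N*b-a))) := by
    have hh1 : (N-1) * Real.sqrt ((N*b-a)/(N-1)) = Real.sqrt ((N-1)*(N*b-a)) := by
      rw [Real.sqrt_div hba, Real.sqrt_mul hN1.le]
      have hs1 : Real.sqrt (N-1) > 0 := Real.sqrt_pos.mpr hN1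
      have hsq : Real.sqrt (N-1) * Real.sqrt (N-1) = N - 1 := Real.mul_self_sqrt hN1.le
      have hsq' : Real.sqrt (N-1)^2 = N - 1 := Real.sq_sqrt hN1.le
      field_simp
      linear_combination (-Real.sqrt (N*b - a)) * hsq'
    have hh2 : ((N-1)/N^2) * ((N-2) * Real.sqrt a * Real.sqrt ((N*b-a)/(N-1)))
        = ((N-2)/N^2) * (Real.sqrt a * ((N-1) * Real.sqrt ((N*b-a)/(N-1)))) := by ring
    rw [mul_sub, hh2, hh1]
    try ring
  have he3 : 2*a - N*b = ∑ α, (2*t α ^2 - N*f α) := by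
    rw [ha', hb', Finset.mul_sum, Finset.mul_sum, ← Finset.sum_sub_distrib]
  calc ∑ α, (T α e0 e0 * (∑ i, T α i i) - ∑ j, (T α e0 j) ^ 2)
      = ∑ α, (x α * t α - s α) := rfl
    _ ≥ ∑ α, (((N-1)/N^2)*(2*(t α)^2 - N*f α)
        - ((N-2)/N^2) * Real.sqrt ((t α)^2) * Real.sqrt ((N-1)*(N*f α - (t α)^2))) :=
        Finset.sum_le_sum (fun α _ => hper α)
    _ = ((N-1)/N^2)*(2*a - N*b) - ((N-2)/N^2) * S := by
        rw [Finset.sum_sub_distrib]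
        congr 1
        · rw [he3, Finset.mul_sum]
        · rw [hSdef, Finset.mul_sum]
          exact Finset.sum_congr rfl (fun α _ => by ring)
    _ ≥ ((N-1)/N^2)*(2*a - N*b) - ((N-2)/N^2) * (Real.sqrt a * Real.sqrt ((N-1)*(N*b-a))) := by
        have hc : 0 ≤ (N-2)/N^2 := div_nonneg (by linarith) (by positivity)
        nlinarith [mul_le_mul_of_nonneg_left hS hc]
    _ = ((N-1)/N^2) * (2*a - N*b - (N-2) * Real.sqrt a
          * Real.sqrt ((N*b - a)/(N-1))) := hrhs.symm
end
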